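/- For every n ≥ 4, in the target group G_D(n), the symmetric generators indexed by disjoint pairs commute: t_{12}·t_{34} = t_{34}·t_{12}. More generally, for any four distinct indices i, j, k, l in {1,…,n}, t_{ij}·t_{kl} = t_{kl}·t_{ij}. -/

import Mathlib

open Monoid Pointwise

/-- The type of `k`-element subsets of `Fin n`. -/
abbrev KSub (n k : ℕ) := {s : Finset (Fin n) // s.card = k}

/-- The free product of copies of `ℤ/2ℤ` indexed by the `k`-element subsets of `Fin n`. -/
abbrev FP (n k : ℕ) := Monoid.CoprodI (fun _ : KSub n k => Multiplicative (ZMod 2))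

/-- The symmetric generator `t_S`. -/
def tFP {n k : ℕ} (S : KSub n k) : FP n k :=
  Monoid.CoprodI.of (i := S) (Multiplicative.ofAdd (1 : ZMod 2))

/-- The action of a permutation of `Fin n` on the `k`-element subsets. -/
instance KSub.instMulAction (n k : ℕ) : MulAction (Equiv.Perm (Fin n)) (KSub n k) where
  smul σ S := ⟨σ • S.1, by rw [Finset.card_smul_finset]; exact S.2⟩
  one_smul S := Subtype.ext (one_smul _ S.1)
  mul_smul σ τ S := Subtype.ext (mul_smul σ τ S.1)

/-- The endomorphism of the free product induced by a permutation of `Fin n`. -/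
def fpHom {n k : ℕ} (σ : Equiv.Perm (Fin n)) : FP n k →* FP n k :=
  Monoid.CoprodI.lift (fun S => Monoid.CoprodI.of (M := fun _ : KSub n k => Multiplicative (ZMod 2)) (i := σ • S))

lemma fpHom_comp {n k : ℕ} (σ τ : Equiv.Perm (Fin n)) :
    (fpHom (n := n) (k := k) σ).comp (fpHom τ) = fpHom (σ * τ) := by
  apply Monoid.CoprodI.ext_hom
  intro S
  ext x
  simp [fpHom, Monoid.CoprodI.lift_of, mul_smul]

lemma fpHom_one {n k : ℕ} : fpHom (n := n) (k := k) 1 = MonoidHom.id _ := by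
  apply Monoid.CoprodI.ext_hom
  intro S
  ext x
  simp [fpHom, Monoid.CoprodI.lift_of]

/-- The action of `Sym(Fin n)` on the free product, permuting the free factors. -/
def fpAut (n k : ℕ) : Equiv.Perm (Fin n) →* MulAut (FP n k) :=
  MonoidHom.mk' (fun σ =>
    { toFun := fpHom σ
      invFun := fpHom σ⁻¹
      left_inv := fun x => by
        have h := fpHom_comp (n := n) (k := k) σ⁻¹ σ
        rw [inv_mul_cancel, fpHom_one] at h
        exact DFunLike.congr_fun h x
      right_inv := fun x => by
        have h := fpHom_comp (n := n) (k := k) σ σ⁻¹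
        rw [mul_inv_cancel, fpHom_one] at h
        exact DFunLike.congr_fun h x
      map_mul' := map_mul _ })
    (fun σ τ => by
      ext x
      exact (DFunLike.congr_fun (fpHom_comp (n := n) (k := k) σ τ) x).symm)

/-- The progenitor `2^{⋆C(n,k)} : Sₙ`. -/
abbrev Progenitor (n k : ℕ) := FP n k ⋊[fpAut n k] Equiv.Perm (Fin n)

/-- The target group: the quotient of the progenitor by the normal closure of the
single relator `(t_{S₀}·σ₀)³`. -/
abbrev TargetGroup (n k : ℕ) (S₀ : KSub n k) (σ₀ : Equiv.Perm (Fin n)) :=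
  Progenitor n k ⧸ Subgroup.normalClosure
    {(SemidirectProduct.inl (tFP S₀) * SemidirectProduct.inr σ₀) ^ 3}

/-- The image in the target group of the symmetric generator `t_S`. -/
def tbar {n k : ℕ} (S₀ : KSub n k) (σ₀ : Equiv.Perm (Fin n)) (S : KSub n k) :
    TargetGroup n k S₀ σ₀ :=
  QuotientGroup.mk (SemidirectProduct.inl (tFP S))

/-- The canonical map from the control group `Sₙ` to the target group. -/
def pbar {n k : ℕ} (S₀ : KSub n k) (σ₀ : Equiv.Perm (Fin n)) :
    Equiv.Perm (Fin n) →* TargetGroup n k S₀ σ₀ :=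
  (QuotientGroup.mk' _).comp (SemidirectProduct.inr)

/-- The subset `{1, 2}` (0-based: `{0, 1}`) of `Fin n`. -/
def S12 (n : ℕ) (hn : 4 ≤ n) : KSub n 2 :=
  ⟨{⟨0, by omega⟩, ⟨1, by omega⟩}, Finset.card_pair (by simp [Fin.ext_iff])⟩

/-- The transposition `(2 3)` (0-based: `(1 2)`) of `Fin n`. -/
def σD (n : ℕ) (hn : 4 ≤ n) : Equiv.Perm (Fin n) :=
  Equiv.swap ⟨1, by omega⟩ ⟨2, by omega⟩

/-- The target group `G_D(n)`, obtained by factoring the progenitor `2^{⋆C(n,2)} : Sₙ`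
by the single relator `(t_{12}·(2 3))³`. -/
abbrev GD (n : ℕ) (hn : 4 ≤ n) := TargetGroup n 2 (S12 n hn) (σD n hn)

/-- The symmetric generator `t_{ij}` of `G_D(n)`. -/
def tD {n : ℕ} (hn : 4 ≤ n) (i j : Fin n) (h : i ≠ j) : GD n hn :=
  tbar (S12 n hn) (σD n hn) ⟨{i, j}, Finset.card_pair h⟩

/-- The canonical map from the control group `Sₙ` to `G_D(n)`. -/
def pD {n : ℕ} (hn : 4 ≤ n) : Equiv.Perm (Fin n) →* GD n hn :=
  pbar (S12 n hn) (σD n hn)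

/-!
Conjugating the relator by permutations (`Sₙ` is 3-transitive) gives `(t_{ij} (j k))³ = 1` for
all distinct `i, j, k`. Since `t_{ij}` and `(j k)` are involutions this is the braid relation
`t_{ij} (j k) t_{ij} = (j k) t_{ij} (j k) = t_{ik}`, equivalently `t_{ij} t_{ik} t_{ij} = (j k)`.
Hence conjugation by `t_{ij}` sends `(j k) ↦ t_{ik}` and `t_{jl} ↦ (i l)`, so it sends
`t_{kl} = (j k) t_{jl} (j k)` to `t_{ik} (i l) t_{ik} = t_{kl}`.
-/

open SemidirectProduct

theorem mul_mul_eq_mul_mul_of_pow_three_eq_one {G : Type*} [Group G] {t s : G}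
    (ht : t * t = 1) (hs : s * s = 1) (h : (t * s) ^ 3 = 1) : t * s * t = s * t * s := by
  have ht' : t⁻¹ = t := inv_eq_of_mul_eq_one_right ht
  have hs' : s⁻¹ = s := inv_eq_of_mul_eq_one_right hs
  have : t * s * t * (s * t * s) = 1 := by simpa only [pow_three, mul_assoc] using h
  simpa only [mul_inv_rev, ht', hs', mul_assoc] using eq_inv_of_mul_eq_one_left this

theorem conj_mul_mul_of_mul_self_eq_one {G : Type*} [Group G] {a : G} (ha : a * a = 1)
    (x y z : G) : a * (x * y * z) * a = (a * x * a) * (a * y * a) * (a * z * a) := by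
  simp only [mul_assoc, ← mul_assoc a a, ha, one_mul]

section TargetGroup

variable {n k : ℕ} (S₀ : KSub n k) (σ₀ : Equiv.Perm (Fin n))

theorem tFP_mul_self (S : KSub n k) : tFP S * tFP S = 1 := by
  rw [tFP, ← map_mul, ← ofAdd_add, show (1 : ZMod 2) + 1 = 0 from rfl, ofAdd_zero, map_one]

theorem fpAut_tFP (σ : Equiv.Perm (Fin n)) (S : KSub n k) :
    fpAut n k σ (tFP S) = tFP (σ • S) :=
  Monoid.CoprodI.lift_of _ _

theorem tbar_mul_self (S : KSub n k) : tbar S₀ σ₀ S * tbar S₀ σ₀ S = 1 := by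
  rw [tbar, ← QuotientGroup.mk_mul, ← map_mul, tFP_mul_self, map_one, QuotientGroup.mk_one]

theorem pbar_mul_tbar_mul_inv (π : Equiv.Perm (Fin n)) (S : KSub n k) :
    pbar S₀ σ₀ π * tbar S₀ σ₀ S * (pbar S₀ σ₀ π)⁻¹ = tbar S₀ σ₀ (π • S) := by
  rw [tbar, tbar, ← fpAut_tFP, inl_aut, pbar]
  simp

theorem tbar_mul_pbar_pow_three : (tbar S₀ σ₀ S₀ * pbar S₀ σ₀ σ₀) ^ 3 = 1 :=
  (QuotientGroup.eq_one_iff _).mpr (Subgroup.subset_normalClosure rfl)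

theorem tbar_smul_mul_pbar_conj_pow_three (π : Equiv.Perm (Fin n)) :
    (tbar S₀ σ₀ (π • S₀) * pbar S₀ σ₀ (π * σ₀ * π⁻¹)) ^ 3 = 1 := by
  have h := congrArg (MulAut.conj (pbar S₀ σ₀ π)) (tbar_mul_pbar_pow_three S₀ σ₀)
  rwa [map_pow, map_mul, MulAut.conj_apply, MulAut.conj_apply, pbar_mul_tbar_mul_inv,
    ← map_inv, ← map_mul, ← map_mul, map_one] at h

end TargetGroup

section GD

variable {n : ℕ} (hn : 4 ≤ n)

theorem smul_pair (π : Equiv.Perm (Fin n)) {i j : Fin n} (h : i ≠ j) :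
    π • (⟨{i, j}, Finset.card_pair h⟩ : KSub n 2) =
      ⟨{π i, π j}, Finset.card_pair (π.injective.ne h)⟩ :=
  Subtype.ext (by
    show π • ({i, j} : Finset (Fin n)) = {π i, π j}
    simp only [Finset.smul_finset_insert, Finset.smul_finset_singleton, Equiv.Perm.smul_def])

theorem tD_mul_self {i j : Fin n} (h : i ≠ j) : tD hn i j h * tD hn i j h = 1 :=
  tbar_mul_self _ _ _

theorem tD_symm {i j : Fin n} (h : i ≠ j) : tD hn j i h.symm = tD hn i j h :=
  congrArg _ (Subtype.ext (Finset.pair_comm j i))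

theorem pD_mul_tD_mul_inv (π : Equiv.Perm (Fin n)) {i j a b : Fin n} (h : i ≠ j) (hab : a ≠ b)
    (ha : π i = a) (hb : π j = b) : pD hn π * tD hn i j h * (pD hn π)⁻¹ = tD hn a b hab := by
  subst ha hb
  exact (pbar_mul_tbar_mul_inv _ _ π _).trans (congrArg _ (smul_pair π h))

theorem pD_swap_mul_tD_mul_pD_swap {x y i j a b : Fin n} (h : i ≠ j) (hab : a ≠ b)
    (ha : Equiv.swap x y i = a) (hb : Equiv.swap x y j = b) :
    pD hn (Equiv.swap x y) * tD hn i j h * pD hn (Equiv.swap x y) = tD hn a b hab := by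
  simpa only [← map_inv, Equiv.swap_inv] using pD_mul_tD_mul_inv hn _ h hab ha hb

theorem exists_perm_apply_zero_one_two {i j k : Fin n} (hij : i ≠ j) (hik : i ≠ k) (hjk : j ≠ k) :
    ∃ π : Equiv.Perm (Fin n), π ⟨0, by omega⟩ = i ∧ π ⟨1, by omega⟩ = j ∧ π ⟨2, by omega⟩ = k := by
  have hinj : Function.Injective ![i, j, k] := by
    intro a b
    fin_cases a <;> fin_cases b <;> simp [hij, hik, hjk, hij.symm, hik.symm, hjk.symm]
  obtain ⟨π, hπ⟩ := Equiv.Perm.exists_extending_pair _ _ (Fin.castLE_injective (by omega)) hinj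
  exact ⟨π, hπ 0, hπ 1, hπ 2⟩

theorem tD_mul_pD_swap_pow_three {i j k : Fin n} (hij : i ≠ j) (hik : i ≠ k) (hjk : j ≠ k) :
    (tD hn i j hij * pD hn (Equiv.swap j k)) ^ 3 = 1 := by
  obtain ⟨π, h0, h1, h2⟩ := exists_perm_apply_zero_one_two hn hij hik hjk
  have hS : π • S12 n hn = ⟨{i, j}, Finset.card_pair hij⟩ := by
    rw [S12, smul_pair π (by simp [Fin.ext_iff])]
    simp only [h0, h1]
  have hσ : π * σD n hn * π⁻¹ = Equiv.swap j k := by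
    rw [σD, ← Equiv.swap_apply_apply, h1, h2]
  have h := tbar_smul_mul_pbar_conj_pow_three (S12 n hn) (σD n hn) π
  rw [hS, hσ] at h
  exact h

theorem tD_mul_pD_swap_mul_tD {i j k : Fin n} (hij : i ≠ j) (hik : i ≠ k) (hjk : j ≠ k) :
    tD hn i j hij * pD hn (Equiv.swap j k) * tD hn i j hij = tD hn i k hik := by
  rw [mul_mul_eq_mul_mul_of_pow_three_eq_one (tD_mul_self hn hij)
    (by rw [← map_mul, Equiv.swap_mul_self, map_one]) (tD_mul_pD_swap_pow_three hn hij hik hjk)]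
  exact pD_swap_mul_tD_mul_pD_swap hn hij hik (Equiv.swap_apply_of_ne_of_ne hij hik)
    (Equiv.swap_apply_left j k)

theorem tD_mul_tD_mul_tD {i j k : Fin n} (hij : i ≠ j) (hik : i ≠ k) (hjk : j ≠ k) :
    tD hn i j hij * tD hn i k hik * tD hn i j hij = pD hn (Equiv.swap j k) := by
  rw [← tD_mul_pD_swap_mul_tD hn hij hik hjk]
  simp only [← mul_assoc, tD_mul_self, one_mul]
  simp only [mul_assoc, tD_mul_self, mul_one]

theorem tD_mul_tD_comm {i j k l : Fin n} (hij : i ≠ j) (hkl : k ≠ l) (hik : i ≠ k)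
    (hil : i ≠ l) (hjk : j ≠ k) (hjl : j ≠ l) :
    tD hn i j hij * tD hn k l hkl = tD hn k l hkl * tD hn i j hij := by
  have hkl_conj : tD hn k l hkl =
      pD hn (Equiv.swap j k) * tD hn j l hjl * pD hn (Equiv.swap j k) :=
    (pD_swap_mul_tD_mul_pD_swap hn hjl hkl (Equiv.swap_apply_left j k)
      (Equiv.swap_apply_of_ne_of_ne hjl.symm hkl.symm)).symm
  have hjl_conj : tD hn i j hij * tD hn j l hjl * tD hn i j hij = pD hn (Equiv.swap i l) := by
    rw [← tD_symm hn hij]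
    exact tD_mul_tD_mul_tD hn hij.symm hjl hil
  have hil_conj : tD hn i k hik * pD hn (Equiv.swap i l) * tD hn i k hik = tD hn k l hkl := by
    rw [← tD_symm hn hik]
    exact tD_mul_pD_swap_mul_tD hn hik.symm hkl hil
  have hconj : tD hn i j hij * tD hn k l hkl * tD hn i j hij = tD hn k l hkl :=
    calc tD hn i j hij * tD hn k l hkl * tD hn i j hij
        = (tD hn i j hij * pD hn (Equiv.swap j k) * tD hn i j hij) *
            (tD hn i j hij * tD hn j l hjl * tD hn i j hij) *
            (tD hn i j hij * pD hn (Equiv.swap j k) * tD hn i j hij) := by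
          rw [hkl_conj]
          exact conj_mul_mul_of_mul_self_eq_one (tD_mul_self hn hij) _ _ _
      _ = tD hn k l hkl := by rw [tD_mul_pD_swap_mul_tD hn hij hik hjk, hjl_conj, hil_conj]
  calc tD hn i j hij * tD hn k l hkl
      = tD hn i j hij * tD hn k l hkl * (tD hn i j hij * tD hn i j hij) := by
        rw [tD_mul_self, mul_one]
    _ = tD hn k l hkl * tD hn i j hij := by rw [← mul_assoc, hconj]

end GD

/-- For every `n ≥ 4`, in `G_D(n)` symmetric generators indexed by disjoint
pairs commute: `t_{12}·t_{34} = t_{34}·t_{12}` (written 0-based below) and, more generally,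
`t_{ij}·t_{kl} = t_{kl}·t_{ij}` for any four pairwise distinct indices `i, j, k, l`. -/
theorem targetGroup_D_disjoint_generators_commute (n : ℕ) (hn : 4 ≤ n) :
    (tD hn ⟨0, by omega⟩ ⟨1, by omega⟩ (by simp [Fin.ext_iff]) *
          tD hn ⟨2, by omega⟩ ⟨3, by omega⟩ (by simp [Fin.ext_iff]) =
        tD hn ⟨2, by omega⟩ ⟨3, by omega⟩ (by simp [Fin.ext_iff]) *
          tD hn ⟨0, by omega⟩ ⟨1, by omega⟩ (by simp [Fin.ext_iff])) ∧
      ∀ (i j k l : Fin n) (hij : i ≠ j) (hkl : k ≠ l),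
        i ≠ k → i ≠ l → j ≠ k → j ≠ l →
          tD hn i j hij * tD hn k l hkl = tD hn k l hkl * tD hn i j hij :=
  ⟨tD_mul_tD_comm hn _ _ (by simp [Fin.ext_iff]) (by simp [Fin.ext_iff])
      (by simp [Fin.ext_iff]) (by simp [Fin.ext_iff]),
    fun _ _ _ _ hij hkl hik hil hjk hjl => tD_mul_tD_comm hn hij hkl hik hil hjk hjl⟩
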